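/- Let D be the GEDM built from a nonzero generalized Laplacian L with parameters a, b, and let E = L̃J + JL̃ - 2L. Then 1'D†1 > 0 if and only if 1'E†1 > 0. -/

import Mathlib

/-!
For any generalized inverse `G` of a matrix `A`, if `1 = A y` and `1 = Aᵀ z` then
`1ᵀ G 1 = zᵀ 1`, whatever `G` is. For `A = a²L̃J + b²JL̃ - 2abL` such `y` and `z` exist as
soon as `diag L ∈ range L + ℝ·1`, i.e. as soon as every `w ∈ ker L` with `1ᵀw = 0` is
orthogonal to `diag L`, and then `zᵀ1 > 0` because `L` is positive semidefinite. Otherwise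
such a `w` has `A w` and `Aᵀ w` both nonzero multiples of `1`, which forces `1ᵀ G 1 = 0`.
The criterion does not involve `a` and `b`, and `E` is the case `a = b = 1`.
-/

open Matrix

def IsMoorePenrose {n : ℕ} (D Dp : Matrix (Fin n) (Fin n) ℝ) : Prop :=
  D * Dp * D = D ∧ Dp * D * Dp = Dp ∧ (D * Dp)ᵀ = D * Dp ∧ (Dp * D)ᵀ = Dp * D

variable {m : Type*}

theorem Matrix.nonempty_of_ne_zero {n R : Type*} [Zero R] {A : Matrix m n R} (hA : A ≠ 0) :
    Nonempty m := by
  by_contra h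
  rw [not_nonempty_iff] at h
  exact hA (ext fun i => isEmptyElim i)

/-- The generalized Euclidean distance matrix `a²L̃J + b²JL̃ - 2abL`. -/
def gedm (L : Matrix m m ℝ) (a b : ℝ) : Matrix m m ℝ :=
  of fun i j => a ^ 2 * L i i + b ^ 2 * L j j - 2 * a * b * L i j

theorem gedm_transpose {L : Matrix m m ℝ} {a b : ℝ} (hL : L.IsSymm) :
    (gedm L a b)ᵀ = gedm L b a := by
  ext i j
  simp only [gedm, transpose_apply, of_apply, hL.apply i j]
  ring

variable [Fintype m]

theorem Matrix.IsHermitian.exists_mulVec_eq [DecidableEq m] {A : Matrix m m ℝ}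
    (hA : A.IsHermitian) {v : m → ℝ} (hv : ∀ w, A *ᵥ w = 0 → v ⬝ᵥ w = 0) :
    ∃ q, A *ᵥ q = v := by
  have hrange : WithLp.toLp 2 v ∈ LinearMap.range A.toEuclideanLin := by
    rw [← Submodule.orthogonal_orthogonal (LinearMap.range _),
      (isSymmetric_toEuclideanLin_iff.mpr hA).orthogonal_range, Submodule.mem_orthogonal]
    intro w hw
    have := hv w.ofLp (by simpa using congrArg WithLp.ofLp hw)
    simpa [EuclideanSpace.inner_eq_star_dotProduct, dotProduct_comm] using this
  obtain ⟨q, hq⟩ := hrange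
  exact ⟨q.ofLp, by simpa using congrArg WithLp.ofLp hq⟩

theorem Matrix.PosSemidef.trace_pos {A : Matrix m m ℝ} (hA : A.PosSemidef) (hA0 : A ≠ 0) :
    0 < A.trace :=
  hA.trace_nonneg.lt_of_ne fun h => hA0 (hA.trace_eq_zero_iff.mp h.symm)

theorem Matrix.diag_dotProduct_one {R : Type*} [NonAssocSemiring R] (A : Matrix m m R) :
    A.diag ⬝ᵥ 1 = A.trace :=
  dotProduct_one _

theorem Matrix.dotProduct_mulVec_eq_of_mul_mul_self {R n : Type*} [CommRing R] [Fintype n]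
    {A : Matrix m n R} {G : Matrix n m R} (hG : A * G * A = A) {y v : n → R} {z u : m → R}
    (hy : A *ᵥ y = u) (hz : Aᵀ *ᵥ z = v) : v ⬝ᵥ (G *ᵥ u) = z ⬝ᵥ u := by
  rw [← hz, ← hy, mulVec_transpose, ← dotProduct_mulVec, mulVec_mulVec, mulVec_mulVec, hG]

theorem one_dotProduct_sub_smul_one_eq_zero [Nonempty m] (w : m → ℝ) :
    1 ⬝ᵥ (w - ((1 ⬝ᵥ w) / Fintype.card m) • (1 : m → ℝ)) = 0 := by
  simp [dotProduct_sub, dotProduct_smul]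

section gedm

variable {L : Matrix m m ℝ} {a b : ℝ}

theorem gedm_mulVec (y : m → ℝ) :
    gedm L a b *ᵥ y = (a ^ 2 * (1 ⬝ᵥ y)) • L.diag + (b ^ 2 * (L.diag ⬝ᵥ y)) • 1
      - (2 * a * b) • (L *ᵥ y) := by
  ext i
  simp only [gedm, mulVec, dotProduct, of_apply, Pi.add_apply, Pi.sub_apply, Pi.smul_apply,
    Pi.one_apply, diag_apply, smul_eq_mul, Finset.mul_sum, ← Finset.sum_add_distrib,
    ← Finset.sum_sub_distrib, Finset.sum_mul]
  exact Finset.sum_congr rfl fun j _ => by ring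

theorem gedm_mulVec_of_mulVec_eq_zero {w : m → ℝ} (hw : L *ᵥ w = 0) (hw1 : 1 ⬝ᵥ w = 0) :
    gedm L a b *ᵥ w = (b ^ 2 * (L.diag ⬝ᵥ w)) • 1 := by
  simp [gedm_mulVec, hw, hw1]

theorem one_dotProduct_mulVec_one_eq_zero_of_gedm (hL : L.IsSymm) (ha : a ≠ 0) (hb : b ≠ 0)
    {G : Matrix m m ℝ} (hG : gedm L a b * G * gedm L a b = gedm L a b) {w : m → ℝ}
    (hw : L *ᵥ w = 0) (hw1 : 1 ⬝ᵥ w = 0) (hxw : L.diag ⬝ᵥ w ≠ 0) :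
    1 ⬝ᵥ (G *ᵥ 1) = 0 := by
  have inv_smul_smul_one {c : ℝ} (hc : c ≠ 0) : c⁻¹ • c • (1 : m → ℝ) = 1 := by
    rw [smul_smul, inv_mul_cancel₀ hc, one_smul]
  have hy : gedm L a b *ᵥ ((b ^ 2 * (L.diag ⬝ᵥ w))⁻¹ • w) = 1 := by
    rw [mulVec_smul, gedm_mulVec_of_mulVec_eq_zero hw hw1, inv_smul_smul_one (by positivity)]
  have hz : (gedm L a b)ᵀ *ᵥ ((a ^ 2 * (L.diag ⬝ᵥ w))⁻¹ • w) = 1 := by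
    rw [gedm_transpose hL, mulVec_smul, gedm_mulVec_of_mulVec_eq_zero hw hw1,
      inv_smul_smul_one (by positivity)]
  rw [dotProduct_mulVec_eq_of_mul_mul_self hG hy hz, smul_dotProduct, dotProduct_comm w, hw1,
    smul_zero]

theorem exists_mulVec_eq_diag_sub_smul_one [DecidableEq m] [Nonempty m] (hL : L.IsHermitian)
    (hL1 : L *ᵥ 1 = 0) (hdiag : ∀ w, L *ᵥ w = 0 → 1 ⬝ᵥ w = 0 → L.diag ⬝ᵥ w = 0) :
    ∃ q, L *ᵥ q = L.diag - (L.trace / Fintype.card m) • 1 ∧ 1 ⬝ᵥ q = 0 := by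
  set v := L.diag - (L.trace / Fintype.card m) • (1 : m → ℝ)
  have hv1 : v ⬝ᵥ 1 = 0 := by
    rw [sub_dotProduct, smul_dotProduct, diag_dotProduct_one, one_dotProduct_one, smul_eq_mul,
      div_mul_cancel₀ _ (by positivity), sub_self]
  have center (w : m → ℝ) : L *ᵥ (w - ((1 ⬝ᵥ w) / Fintype.card m) • 1) = L *ᵥ w := by
    simp [mulVec_sub, mulVec_smul, hL1]
  obtain ⟨q, hq⟩ := hL.exists_mulVec_eq (v := v) fun w hw => by
    set w₀ := w - ((1 ⬝ᵥ w) / Fintype.card m) • (1 : m → ℝ)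
    have hw₀ : 1 ⬝ᵥ w₀ = 0 := one_dotProduct_sub_smul_one_eq_zero w
    calc v ⬝ᵥ w = v ⬝ᵥ w₀ := by simp [w₀, dotProduct_sub, dotProduct_smul, hv1]
      _ = L.diag ⬝ᵥ w₀ - (L.trace / Fintype.card m) * (1 ⬝ᵥ w₀) := by
        simp [v, sub_dotProduct, smul_dotProduct]
      _ = 0 := by rw [hdiag w₀ (by rw [center, hw]) hw₀, hw₀]; ring
  exact ⟨_, by rw [center, hq], one_dotProduct_sub_smul_one_eq_zero q⟩

theorem exists_gedm_mulVec_eq_one (hL : L.PosSemidef) (hL1 : L *ᵥ 1 = 0) (hL0 : L ≠ 0)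
    (ha : 0 < a) (hb : 0 < b) {q : m → ℝ}
    (hq : L *ᵥ q = L.diag - (L.trace / Fintype.card m) • 1) (hq1 : 1 ⬝ᵥ q = 0) :
    ∃ y, gedm L a b *ᵥ y = 1 ∧ 0 < 1 ⬝ᵥ y := by
  have := nonempty_of_ne_zero hL0
  set n : ℝ := (Fintype.card m : ℝ)
  set β := L.trace / n
  set κ := q ⬝ᵥ (L *ᵥ q)
  have hn : 0 < n := by positivity
  have hβ : 0 < β := div_pos (hL.trace_pos hL0) hn
  have hκ : 0 ≤ κ := by simpa using hL.dotProduct_mulVec_nonneg q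
  have hxq : L.diag ⬝ᵥ q = κ := by
    rw [dotProduct_comm, show κ = q ⬝ᵥ (L *ᵥ q) from rfl, hq, dotProduct_sub, dotProduct_smul,
      dotProduct_comm q 1, hq1, smul_zero, sub_zero]
  have hx1 : L.diag ⬝ᵥ 1 = n * β := by
    rw [mul_div_cancel₀ _ hn.ne', diag_dotProduct_one]
  -- `y` is chosen so that the `L.diag` components of `gedm L a b *ᵥ y` cancel.
  set τ := (a * b ^ 2 * κ + 2 * b * (a ^ 2 + b ^ 2) * β)⁻¹
  have hτ : τ * (a * b ^ 2 * κ + 2 * b * (a ^ 2 + b ^ 2) * β) = 1 :=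
    inv_mul_cancel₀ (by positivity)
  set y := (a * τ) • q + (2 * b * τ / n) • (1 : m → ℝ)
  have h1y : 1 ⬝ᵥ y = 2 * b * τ := by
    simp [y, n, dotProduct_add, dotProduct_smul, hq1]
  have hxy : L.diag ⬝ᵥ y = a * τ * κ + 2 * b * τ * β := by
    simp only [y, dotProduct_add, dotProduct_smul, hxq, hx1, smul_eq_mul]
    field_simp
  have hLy : L *ᵥ y = (a * τ) • (L.diag - β • 1) := by
    simp [y, mulVec_add, mulVec_smul, hq, hL1, β]
  refine ⟨y, ?_, by rw [h1y]; positivity⟩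
  ext i
  simp only [gedm_mulVec, h1y, hxy, hLy, Pi.add_apply, Pi.sub_apply, Pi.smul_apply,
    Pi.one_apply, smul_eq_mul]
  linear_combination hτ

theorem one_dotProduct_mulVec_one_pos_iff_of_gedm (hL : L.PosSemidef) (hL1 : L *ᵥ 1 = 0)
    (hL0 : L ≠ 0) (ha : 0 < a) (hb : 0 < b) {G : Matrix m m ℝ}
    (hG : gedm L a b * G * gedm L a b = gedm L a b) :
    0 < 1 ⬝ᵥ (G *ᵥ 1) ↔ ∀ w, L *ᵥ w = 0 → 1 ⬝ᵥ w = 0 → L.diag ⬝ᵥ w = 0 := by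
  classical
  have hsymm : L.IsSymm := isHermitian_iff_isSymm.mp hL.isHermitian
  constructor
  · intro hpos w hw hw1
    by_contra hxw
    exact hpos.ne' (one_dotProduct_mulVec_one_eq_zero_of_gedm hsymm ha.ne' hb.ne' hG hw hw1 hxw)
  · intro hdiag
    have := nonempty_of_ne_zero hL0
    obtain ⟨q, hq, hq1⟩ := exists_mulVec_eq_diag_sub_smul_one hL.isHermitian hL1 hdiag
    obtain ⟨y, hy, -⟩ := exists_gedm_mulVec_eq_one hL hL1 hL0 ha hb hq hq1
    obtain ⟨z, hz, hz1⟩ := exists_gedm_mulVec_eq_one hL hL1 hL0 hb ha hq hq1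
    rwa [dotProduct_mulVec_eq_of_mul_mul_self hG hy (by rwa [gedm_transpose hsymm]),
      dotProduct_comm]

end gedm

/-- With `E = L̃J + JL̃ - 2L`: `1ᵀ D† 1 > 0` iff `1ᵀ E† 1 > 0`. -/
theorem stmt15 (n : ℕ) (L D : Matrix (Fin n) (Fin n) ℝ) (hL : L.PosSemidef)
    (hL1 : L *ᵥ (fun _ => (1 : ℝ)) = 0) (hL0 : L ≠ 0)
    (a b : ℝ) (ha : 0 < a) (hb : 0 < b)
    (hD : ∀ i j, D i j = a ^ 2 * L i i + b ^ 2 * L j j - 2 * a * b * L i j)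
    (Dp : Matrix (Fin n) (Fin n) ℝ) (hDp : IsMoorePenrose D Dp)
    (E : Matrix (Fin n) (Fin n) ℝ)
    (hE : E = (Matrix.diagonal fun i => L i i) * (Matrix.of fun _ _ => (1 : ℝ)) +
        (Matrix.of fun _ _ => (1 : ℝ)) * (Matrix.diagonal fun i => L i i) - 2 • L)
    (Ep : Matrix (Fin n) (Fin n) ℝ) (hEp : IsMoorePenrose E Ep) :
    0 < (fun _ => (1 : ℝ)) ⬝ᵥ (Dp *ᵥ fun _ => (1 : ℝ)) ↔
    0 < (fun _ => (1 : ℝ)) ⬝ᵥ (Ep *ᵥ fun _ => (1 : ℝ)) := by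
  have hDL : D = gedm L a b := ext hD
  have hEL : E = gedm L 1 1 := by
    ext i j
    simp only [hE, gedm, Matrix.sub_apply, Matrix.add_apply, Matrix.smul_apply, diagonal_mul,
      mul_diagonal, of_apply]
    ring
  subst hDL hEL
  exact (one_dotProduct_mulVec_one_pos_iff_of_gedm hL hL1 hL0 ha hb hDp.1).trans
    (one_dotProduct_mulVec_one_pos_iff_of_gedm hL hL1 hL0 one_pos one_pos hEp.1).symm
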